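/- Let L ≥ 2, N = L², let t ≥ 1 be an odd integer, and set l̃ = ⌊√(N/(4t))⌋. Then Σ_{k ∈ (ℤ/L)², k ≠ 0} 1/(1 − λ_k^t)² ≤ (2N²/t²) · Σ_{l=1}^{l̃} 1/l³ + (8/(1 − e^{−1})²) · Σ_{l=l̃+1}^{⌊L/2⌋} l (empty sums being zero). -/

import Mathlib

/-- The normalized adjacency matrix of the `L×L` torus graph on `(ℤ/L)²`:
`A(u,v)` is the number of the four unit coordinate steps leading from `u` to `v`,
divided by `4`. -/
noncomputable def torusAdj (L : ℕ) : Matrix (ZMod L × ZMod L) (ZMod L × ZMod L) ℝ :=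
  Matrix.of fun u v =>
    ((if u + (1, 0) = v then (1 : ℝ) else 0) + (if u + (-1, 0) = v then 1 else 0) +
      (if u + (0, 1) = v then 1 else 0) + (if u + (0, -1) = v then 1 else 0)) / 4

/-- The eigenvalue `λ_k = (cos(2π k_x/L) + cos(2π k_y/L))/2` of the torus adjacency matrix,
well-defined on residues since cosine is `2π`-periodic. -/
noncomputable def torusEig (L : ℕ) (k : ZMod L × ZMod L) : ℝ :=
  (Real.cos (2 * Real.pi * k.1.val / L) + Real.cos (2 * Real.pi * k.2.val / L)) / 2

/-!
Take the centered representative `(a, b) ∈ (-L/2, L/2]²` of `k` and its shell index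
`l = max |a| |b|`. Since `cos θ ≤ 1 - 2θ²/π²` on `[-π, π]`, `λ_k ≤ 1 - 4(a² + b²)/N ≤ 1 - 4l²/N`,
so for odd `t` (a negative `λ_k` only helps) `λ_k^t ≤ exp(-y)` with `y = 4l²t/N`. The shells
`l ≤ l̃` are exactly those with `y ≤ 1`, where `1 - e^{-y} ≥ y/2` gives the term `N²/(4t²l⁴)`;
on the others `1 - e^{-y} ≥ 1 - e^{-1}`. The shell of index `l` has at most `8l` points.
-/

open Real Finset

lemma Finset.sum_le_sum_mul_card_fiber {ι κ R : Type*} [DecidableEq κ] [Semiring R]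
    [PartialOrder R] [IsOrderedRing R] {s : Finset ι} {t : Finset κ} {g : ι → κ}
    {f : ι → R} {B c : κ → R} (hg : ∀ i ∈ s, g i ∈ t) (hf : ∀ i ∈ s, f i ≤ B (g i))
    (hB : ∀ j ∈ t, 0 ≤ B j) (hc : ∀ j ∈ t, (#{i ∈ s | g i = j} : R) ≤ c j) :
    ∑ i ∈ s, f i ≤ ∑ j ∈ t, c j * B j :=
  calc ∑ i ∈ s, f i ≤ ∑ i ∈ s, B (g i) := sum_le_sum hf
    _ = ∑ j ∈ t, ∑ i ∈ s with g i = j, B (g i) := (sum_fiberwise_of_maps_to hg _).symm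
    _ = ∑ j ∈ t, #{i ∈ s | g i = j} * B j := sum_congr rfl fun j _ => by
        rw [sum_congr rfl fun i hi => by rw [(mem_filter.1 hi).2], sum_const, nsmul_eq_mul]
    _ ≤ ∑ j ∈ t, c j * B j := sum_le_sum fun j hj => mul_le_mul_of_nonneg_right (hc j hj) (hB j hj)

lemma Finset.sum_Icc_ite_le {M : Type*} [AddCommMonoid M] [PartialOrder M]
    [IsOrderedAddMonoid M] (a b : ℕ → M) (ha : ∀ l, 0 ≤ a l) (n m : ℕ) :
    ∑ l ∈ Icc 1 m, (if l ≤ n then a l else b l) ≤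
      ∑ l ∈ Icc 1 n, a l + ∑ l ∈ Icc (n + 1) m, b l := by
  rw [sum_ite]
  refine add_le_add (sum_le_sum_of_subset_of_nonneg ?_ fun l _ _ => ha l) (le_of_eq ?_)
  · intro l hl
    simp only [mem_filter, mem_Icc] at hl ⊢
    omega
  · congr 1
    ext l
    simp only [mem_filter, mem_Icc]
    omega

lemma ZMod.cos_two_pi_mul_val_div {n : ℕ} [NeZero n] (x : ZMod n) :
    cos (2 * π * x.val / n) = cos (2 * π * x.valMinAbs / n) := by
  have hn : (n : ℝ) ≠ 0 := Nat.cast_ne_zero.2 (NeZero.ne n)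
  rw [ZMod.valMinAbs_def_pos]
  split
  · norm_num
  · push_cast
    rw [← cos_sub_two_pi (2 * π * x.val / n)]
    congr 1
    field_simp

lemma cos_two_pi_mul_div_le {n c : ℝ} (hn : 0 < n) (hc : |c| ≤ n / 2) :
    cos (2 * π * c / n) ≤ 1 - 8 * c ^ 2 / n ^ 2 := by
  have hx : |2 * π * c / n| ≤ π := by
    rw [abs_div, abs_mul, abs_of_pos two_pi_pos, abs_of_pos hn, div_le_iff₀ hn]
    nlinarith [pi_pos]
  convert cos_le_one_sub_mul_cos_sq hx using 2
  field_simp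
  ring

lemma ZMod.cos_two_pi_mul_val_div_le {n : ℕ} [NeZero n] (x : ZMod n) :
    cos (2 * π * x.val / n) ≤ 1 - 8 * (x.valMinAbs : ℝ) ^ 2 / n ^ 2 := by
  rw [x.cos_two_pi_mul_val_div]
  refine cos_two_pi_mul_div_le (Nat.cast_pos.2 (NeZero.pos n)) ?_
  calc |(x.valMinAbs : ℝ)| = (x.valMinAbs.natAbs : ℝ) := by rw [Nat.cast_natAbs, Int.cast_abs]
    _ ≤ ((n / 2 : ℕ) : ℝ) := by exact_mod_cast x.natAbs_valMinAbs_le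
    _ ≤ n / 2 := Nat.cast_div_le

lemma pow_le_exp_neg_mul_of_le_one_sub {μ x : ℝ} {t : ℕ} (ht : Odd t) (hμ : μ ≤ 1 - x) :
    μ ^ t ≤ exp (-(x * t)) := by
  rcases le_or_gt μ 0 with hμ0 | hμ0
  · exact (ht.pow_nonpos hμ0).trans (exp_pos _).le
  · calc μ ^ t ≤ (1 - x) ^ t := pow_le_pow_left₀ hμ0.le hμ t
      _ ≤ exp (-x) ^ t := pow_le_pow_left₀ (by linarith) (by linarith [add_one_le_exp (-x)]) t
      _ = exp (-(x * t)) := by rw [← exp_nat_mul]; ring_nf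

-- `exp` is convex, so on `[0, 1]` the chord gives `1 - e^{-y} ≥ (1 - e^{-1}) y`.
lemma half_le_one_sub_exp_neg {y : ℝ} (h0 : 0 ≤ y) (h1 : y ≤ 1) : y / 2 ≤ 1 - exp (-y) := by
  have hc := convexOn_exp.2 (Set.mem_univ (-1 : ℝ)) (Set.mem_univ (0 : ℝ))
      h0 (by linarith : (0 : ℝ) ≤ 1 - y) (by ring)
  simp only [smul_eq_mul, mul_zero, add_zero, mul_neg, mul_one, exp_zero] at hc
  nlinarith [exp_neg_one_lt_half]

/-- Bound on `1 / (1 - e^{-y})²`, from `1 - e^{-y} ≥ y / 2` for `y ≤ 1`. -/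
noncomputable def invSqGapBound (y : ℝ) : ℝ :=
  if y ≤ 1 then 4 / y ^ 2 else 1 / (1 - exp (-1)) ^ 2

lemma invSqGapBound_nonneg (y : ℝ) : 0 ≤ invSqGapBound y := by
  have : 0 < 1 - exp (-1) := by linarith [exp_neg_one_lt_half]
  unfold invSqGapBound
  split_ifs <;> positivity

lemma one_div_one_sub_sq_le_invSqGapBound {p y : ℝ} (hy : 0 < y) (hp : p ≤ exp (-y)) :
    1 / (1 - p) ^ 2 ≤ invSqGapBound y := by
  unfold invSqGapBound
  split_ifs with hy1
  · have hden : y / 2 ≤ 1 - p := by linarith [half_le_one_sub_exp_neg hy.le hy1]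
    calc 1 / (1 - p) ^ 2 ≤ 1 / (y / 2) ^ 2 :=
          one_div_le_one_div_of_le (by positivity) (pow_le_pow_left₀ (by positivity) hden 2)
      _ = 4 / y ^ 2 := by field_simp; norm_num
  · have hpos : 0 < 1 - exp (-1) := by linarith [exp_neg_one_lt_half]
    have hden : 1 - exp (-1) ≤ 1 - p := by linarith [exp_le_exp.2 (neg_le_neg (not_le.1 hy1).le)]
    exact one_div_le_one_div_of_le (by positivity) (pow_le_pow_left₀ hpos.le hden 2)

section Torus

variable {L : ℕ}

def torusShell (L : ℕ) (k : ZMod L × ZMod L) : ℕ :=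
  max k.1.valMinAbs.natAbs k.2.valMinAbs.natAbs

lemma one_le_torusShell {k : ZMod L × ZMod L} (hk : k ≠ 0) : 1 ≤ torusShell L k := by
  by_contra h
  have h1 : k.1.valMinAbs = 0 := by unfold torusShell at h; omega
  have h2 : k.2.valMinAbs = 0 := by unfold torusShell at h; omega
  exact hk (Prod.ext ((ZMod.valMinAbs_eq_zero _).1 h1) ((ZMod.valMinAbs_eq_zero _).1 h2))

lemma torusShell_le_half [NeZero L] (k : ZMod L × ZMod L) : torusShell L k ≤ L / 2 :=
  max_le k.1.natAbs_valMinAbs_le k.2.natAbs_valMinAbs_le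

lemma sq_torusShell_le (k : ZMod L × ZMod L) :
    (torusShell L k : ℝ) ^ 2 ≤ (k.1.valMinAbs : ℝ) ^ 2 + (k.2.valMinAbs : ℝ) ^ 2 := by
  rw [torusShell, Nat.cast_max, Nat.cast_natAbs, Nat.cast_natAbs, Int.cast_abs, Int.cast_abs]
  rcases max_cases |(k.1.valMinAbs : ℝ)| |(k.2.valMinAbs : ℝ)| with ⟨h, _⟩ | ⟨h, _⟩ <;>
    rw [h, sq_abs] <;> nlinarith

lemma card_Icc_product_sdiff_Ioo_product {l : ℕ} (hl : 0 < l) :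
    #((Icc (-(l : ℤ)) l ×ˢ Icc (-(l : ℤ)) l) \ (Ioo (-(l : ℤ)) l ×ˢ Ioo (-(l : ℤ)) l)) = 8 * l := by
  rw [card_sdiff_of_subset (product_subset_product Ioo_subset_Icc_self Ioo_subset_Icc_self),
    card_product, card_product, Int.card_Icc, Int.card_Ioo]
  obtain ⟨j, rfl⟩ : ∃ j, l = j + 1 := ⟨l - 1, by omega⟩
  rw [show ((j + 1 : ℕ) + 1 - -((j + 1 : ℕ) : ℤ)).toNat = 2 * j + 3 by omega,
    show ((j + 1 : ℕ) - -((j + 1 : ℕ) : ℤ) - 1).toNat = 2 * j + 1 by omega]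
  have : (2 * j + 3) * (2 * j + 3) = (2 * j + 1) * (2 * j + 1) + 8 * (j + 1) := by ring
  omega

lemma card_torusShell_eq_le [NeZero L] {l : ℕ} (hl : 0 < l) :
    #{k : ZMod L × ZMod L | torusShell L k = l} ≤ 8 * l := by
  rw [← card_Icc_product_sdiff_Ioo_product hl]
  refine card_le_card_of_injOn (fun k => (k.1.valMinAbs, k.2.valMinAbs)) (fun k hk => ?_)
    fun a _ b _ h => Prod.ext (ZMod.valMinAbs_inj.1 (Prod.ext_iff.1 h).1)
      (ZMod.valMinAbs_inj.1 (Prod.ext_iff.1 h).2)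
  replace hk := (mem_filter.1 hk).2
  unfold torusShell at hk
  simp only [SetLike.mem_coe, mem_sdiff, mem_product, mem_Icc, mem_Ioo]
  omega

lemma torusEig_le_one_sub [NeZero L] (k : ZMod L × ZMod L) :
    torusEig L k ≤ 1 - 4 * (torusShell L k : ℝ) ^ 2 / L ^ 2 := by
  have h1 := k.1.cos_two_pi_mul_val_div_le
  have h2 := k.2.cos_two_pi_mul_val_div_le
  have h3 : 4 * (torusShell L k : ℝ) ^ 2 / L ^ 2 ≤
      4 * ((k.1.valMinAbs : ℝ) ^ 2 + (k.2.valMinAbs : ℝ) ^ 2) / L ^ 2 := by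
    gcongr
    exact sq_torusShell_le k
  rw [torusEig]
  linarith [show 4 * ((k.1.valMinAbs : ℝ) ^ 2 + (k.2.valMinAbs : ℝ) ^ 2) / L ^ 2 =
    (8 * (k.1.valMinAbs : ℝ) ^ 2 / L ^ 2 + 8 * (k.2.valMinAbs : ℝ) ^ 2 / L ^ 2) / 2 by ring]

lemma torusEig_pow_le_exp [NeZero L] {t : ℕ} (ht : Odd t) (k : ZMod L × ZMod L) :
    torusEig L k ^ t ≤ exp (-(4 * (torusShell L k : ℝ) ^ 2 * t / L ^ 2)) := by
  convert pow_le_exp_neg_mul_of_le_one_sub ht (torusEig_le_one_sub k) using 3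
  ring

lemma one_div_one_sub_torusEig_pow_sq_le [NeZero L] {t : ℕ} (ht : Odd t)
    {k : ZMod L × ZMod L} (hk : k ≠ 0) :
    1 / (1 - torusEig L k ^ t) ^ 2 ≤
      invSqGapBound (4 * (torusShell L k : ℝ) ^ 2 * t / L ^ 2) := by
  have hl : (0 : ℝ) < torusShell L k := Nat.cast_pos.2 (one_le_torusShell hk)
  have htR : (0 : ℝ) < t := Nat.cast_pos.2 ht.pos
  have hL : (0 : ℝ) < L := Nat.cast_pos.2 (NeZero.pos L)
  exact one_div_one_sub_sq_le_invSqGapBound (by positivity) (torusEig_pow_le_exp ht k)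

end Torus

theorem torus_sum_inv_one_sub_pow_sq_upper_bound_general
    (L : ℕ) [NeZero L] (t : ℕ) (hodd : Odd t)
    (N : ℕ) (hN : N = L ^ 2)
    (ltil : ℕ) (hltil : ltil = ⌊Real.sqrt ((N : ℝ) / (4 * t))⌋₊) :
    ∑ k ∈ Finset.univ.filter (fun k : ZMod L × ZMod L => k ≠ 0),
        1 / (1 - torusEig L k ^ t) ^ 2 ≤
      (2 * (N : ℝ) ^ 2 / (t : ℝ) ^ 2) * ∑ l ∈ Finset.Icc 1 ltil, 1 / (l : ℝ) ^ 3 +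
        (8 / (1 - Real.exp (-1)) ^ 2) * ∑ l ∈ Finset.Icc (ltil + 1) (L / 2), (l : ℝ) := by
  have hNR : (N : ℝ) = L ^ 2 := by rw [hN]; push_cast; ring
  have hshell (l : ℕ) : l ≤ ltil ↔ 4 * (l : ℝ) ^ 2 * t / L ^ 2 ≤ 1 := by
    have ht : (0 : ℝ) < t := Nat.cast_pos.2 hodd.pos
    have hL : (0 : ℝ) < L := Nat.cast_pos.2 (NeZero.pos L)
    rw [hltil, hNR, Nat.le_floor_iff (sqrt_nonneg _), le_sqrt (Nat.cast_nonneg _) (by positivity),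
      le_div_iff₀ (by positivity), div_le_one (by positivity)]
    ring_nf
  calc ∑ k ∈ univ.filter (fun k : ZMod L × ZMod L => k ≠ 0), 1 / (1 - torusEig L k ^ t) ^ 2
      ≤ ∑ l ∈ Icc 1 (L / 2), (8 * l : ℝ) * invSqGapBound (4 * (l : ℝ) ^ 2 * t / L ^ 2) :=
        sum_le_sum_mul_card_fiber
          (fun k hk => mem_Icc.2 ⟨one_le_torusShell (mem_filter.1 hk).2, torusShell_le_half k⟩)
          (fun k hk => one_div_one_sub_torusEig_pow_sq_le hodd (mem_filter.1 hk).2)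
          (fun _ _ => invSqGapBound_nonneg _) fun l hl => by
            exact_mod_cast (card_le_card (filter_subset_filter _ (subset_univ _))).trans
              (card_torusShell_eq_le (mem_Icc.1 hl).1)
    _ = ∑ l ∈ Icc 1 (L / 2), if l ≤ ltil then 2 * (N : ℝ) ^ 2 / t ^ 2 * (1 / (l : ℝ) ^ 3)
          else 8 / (1 - exp (-1)) ^ 2 * l := sum_congr rfl fun l hl => by
        have : (0 : ℝ) < l := Nat.cast_pos.2 (mem_Icc.1 hl).1
        simp only [invSqGapBound, ← hshell, hNR]
        split_ifs
        · field_simp; ring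
        · field_simp
    _ ≤ _ := by
      rw [mul_sum, mul_sum]
      exact sum_Icc_ite_le _ _ (fun l => by positivity) ltil (L / 2)

/-- For `L ≥ 2`, `N = L²`, odd `t ≥ 1`, and `l̃ = ⌊√(N/(4t))⌋`,
`Σ_{k ≠ 0} 1/(1 − λ_k^t)² ≤ (2N²/t²) Σ_{l=1}^{l̃} 1/l³
  + (8/(1 − e^{−1})²) Σ_{l=l̃+1}^{⌊L/2⌋} l`. -/
theorem torus_sum_inv_one_sub_pow_sq_upper_bound
    (L : ℕ) [NeZero L] (hL : 2 ≤ L) (t : ℕ) (ht : 1 ≤ t) (hodd : Odd t)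
    (N : ℕ) (hN : N = L ^ 2)
    (ltil : ℕ) (hltil : ltil = ⌊Real.sqrt ((N : ℝ) / (4 * t))⌋₊) :
    ∑ k ∈ Finset.univ.filter (fun k : ZMod L × ZMod L => k ≠ 0),
        1 / (1 - torusEig L k ^ t) ^ 2 ≤
      (2 * (N : ℝ) ^ 2 / (t : ℝ) ^ 2) * ∑ l ∈ Finset.Icc 1 ltil, 1 / (l : ℝ) ^ 3 +
        (8 / (1 - Real.exp (-1)) ^ 2) * ∑ l ∈ Finset.Icc (ltil + 1) (L / 2), (l : ℝ) :=
  torus_sum_inv_one_sub_pow_sq_upper_bound_general L t hodd N hN ltil hltil
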